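/- Let g : ℝⁿ × ℝ → ℝⁿ and the pair (x̂, û) solve the characteristic system dx̂/dt = g(x̂, û), dû/dt = -L(û) on an interval, and suppose ψ(t, x̂(t;λ)) = λ for all t and λ, with ψ C¹. Then u(t,x) := û(t, ψ(t,x)) satisfies the Hamilton–Jacobi equation ∂_t u(t,x) + ⟨∂_x u(t,x), g(x, u(t,x))⟩ + L(u(t,x)) = 0. -/

import Mathlib

/-! Since `ψ` inverts the characteristic flow, `u(s, x̂(s;λ)) = û(s, λ)` near `t`. Differentiating
both sides in `s`, the chain rule turns the left side into `∂_t u + ∂_x u · g(x̂, û)` and the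
characteristic equation turns the right side into `-L(û)`. -/

open Function

section PartialDerivatives

variable {E F : Type*} [NormedAddCommGroup E] [NormedSpace ℝ E]
  [NormedAddCommGroup F] [NormedSpace ℝ F]

theorem hasDerivAt_apply_of_differentiableAt_uncurry {Φ : ℝ → E → F} {γ : ℝ → E} {v : E}
    {t : ℝ} (hΦ : DifferentiableAt ℝ (uncurry Φ) (t, γ t)) (hγ : HasDerivAt γ v t) :
    HasDerivAt (fun s => Φ s (γ s))
      (deriv (fun s => Φ s (γ t)) t + fderiv ℝ (Φ t) (γ t) v) t := by
  set D := fderiv ℝ (uncurry Φ) (t, γ t)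
  have hD : HasFDerivAt (uncurry Φ) D (t, γ t) := hΦ.hasFDerivAt
  have h_time : deriv (fun s => Φ s (γ t)) t = D (1, 0) := by
    exact (hD.comp_hasDerivAt t ((hasDerivAt_id t).prodMk (hasDerivAt_const t (γ t)))).deriv
  have h_space : fderiv ℝ (Φ t) (γ t) = D.comp (ContinuousLinearMap.inr ℝ ℝ E) :=
    (hD.comp (γ t) (hasFDerivAt_prodMk_right t (γ t))).fderiv
  have h_split : D (1, v) = D (1, 0) + D (0, v) := by
    rw [← map_add, Prod.mk_add_mk, add_zero, zero_add]
  rw [h_time, h_space, ContinuousLinearMap.comp_apply, ContinuousLinearMap.inr_apply,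
    ← h_split]
  exact hD.comp_hasDerivAt t ((hasDerivAt_id t).prodMk hγ)

end PartialDerivatives

/-- Method of characteristics: if `(x̂, û)` solves the characteristic system
`dx̂/dt = g(x̂, û)`, `dû/dt = -L(û)` on `(a,b)` and `ψ(t, x̂(t;λ)) = λ` with
`ψ` and `û` of class `C¹`, then `u(t,x) := û(t, ψ(t,x))` solves
`∂_t u + ⟨∂_x u, g(x, u)⟩ + L(u) = 0` along the characteristics. -/
theorem stmt_7 (n : ℕ) (a b : ℝ)
    (g : (Fin n → ℝ) → ℝ → (Fin n → ℝ)) (L : ℝ → ℝ)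
    (xh : ℝ → (Fin n → ℝ) → (Fin n → ℝ)) (uh : ℝ → (Fin n → ℝ) → ℝ)
    (ψ : ℝ → (Fin n → ℝ) → (Fin n → ℝ))
    (hxh : ∀ lam : Fin n → ℝ, ∀ t ∈ Set.Ioo a b,
      HasDerivAt (fun s => xh s lam) (g (xh t lam) (uh t lam)) t)
    (huh : ∀ lam : Fin n → ℝ, ∀ t ∈ Set.Ioo a b,
      HasDerivAt (fun s => uh s lam) (-(L (uh t lam))) t)
    (huC1 : ContDiff ℝ 1 (fun p : ℝ × (Fin n → ℝ) => uh p.1 p.2))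
    (hψC1 : ContDiff ℝ 1 (fun p : ℝ × (Fin n → ℝ) => ψ p.1 p.2))
    (hinv : ∀ t ∈ Set.Ioo a b, ∀ lam : Fin n → ℝ, ψ t (xh t lam) = lam) :
    ∀ t ∈ Set.Ioo a b, ∀ lam : Fin n → ℝ,
      deriv (fun s => uh s (ψ s (xh t lam))) t
        + fderiv ℝ (fun y => uh t (ψ t y)) (xh t lam)
            (g (xh t lam) (uh t (ψ t (xh t lam))))
        + L (uh t (ψ t (xh t lam))) = 0 := by
  intro t ht lam
  have hu_diff : Differentiable ℝ (fun p : ℝ × (Fin n → ℝ) => uh p.1 (ψ p.1 p.2)) :=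
    (huC1.comp (contDiff_fst.prodMk hψC1)).differentiable one_ne_zero
  have h_chain := hasDerivAt_apply_of_differentiableAt_uncurry
    (Φ := fun s y => uh s (ψ s y)) (hu_diff _) (hxh lam t ht)
  have h_along : (fun s => uh s lam) =ᶠ[nhds t] fun s => uh s (ψ s (xh s lam)) := by
    filter_upwards [Ioo_mem_nhds ht.1 ht.2] with s hs
    rw [hinv s hs lam]
  have h_eq := (huh lam t ht).unique (h_chain.congr_of_eventuallyEq h_along)
  rw [hinv t ht lam]
  linarith
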